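/- Let v ∈ ℕ with v ≥ 1, let b ∈ ℕ with b < 2^v, and set m = α(b). Then for every t ∈ ℕ, Φ(b̄_{v,t}) = Φ(b̄_{v,∞}) − (Φ(b̄_{v,∞})/3^{mt})·2^{tv}, where division by 3^{mt} means multiplication by its inverse in ℤ₂. -/

import Mathlib

noncomputable section

/-- The inverse of `3` in the ring of 2-adic integers. -/
def inv3 : ℤ_[2] := Ring.inverse 3

/-- The `j`-th binary digit of a 2-adic integer (as `0` or `1`). -/
def dig (x : ℤ_[2]) (j : ℕ) : ℕ := if Nat.testBit (x.appr (j + 1)) j then 1 else 0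

/-- The number of one digits of `x` in positions `< j`. -/
def digCount (x : ℤ_[2]) (j : ℕ) : ℕ := ∑ i ∈ Finset.range j, dig x i

/-- Bernstein's formula for the 3x+1 conjugacy map `Φ`:
if `x = ∑_i 2^{d_i}` with `d_0 < d_1 < ⋯`, then `Φ x = -∑_i 2^{d_i} 3^{-i}`. -/
def Phi (x : ℤ_[2]) : ℤ_[2] :=
  -∑' j : ℕ, (dig x j : ℤ_[2]) * 2 ^ j * inv3 ^ digCount x j

/-- `L_k(x)`: the unique natural number `< 2^k` congruent to `x` mod `2^k`. -/
def Lk (k : ℕ) (x : ℤ_[2]) : ℕ := x.appr k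

theorem two_pow_dvd_sub_appr (k : ℕ) (x : ℤ_[2]) :
    (2 : ℤ_[2]) ^ k ∣ x - (x.appr k : ℤ_[2]) := by
  have h := PadicInt.appr_spec k x
  rw [Ideal.mem_span_singleton] at h
  exact_mod_cast h

theorem exists_Rk (k : ℕ) (x : ℤ_[2]) :
    ∃ z : ℤ_[2], x = (x.appr k : ℤ_[2]) + 2 ^ k * z := by
  obtain ⟨c, hc⟩ := two_pow_dvd_sub_appr k x
  exact ⟨c, by rw [← hc]; ring⟩

/-- `R_k(x)`: the unique 2-adic integer with `x = L_k(x) + 2^k · R_k(x)`. -/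
def Rk (k : ℕ) (x : ℤ_[2]) : ℤ_[2] := (exists_Rk k x).choose

/-- `α(a)`: the number of ones in the binary expansion of `a`. -/
def alphaNat (a : ℕ) : ℕ := (Nat.bits a).count true

/-- `b̄_{v,∞} = b · ∑_{i=0}^∞ 2^{v i}` as a 2-adic integer. -/
def bbar (b v : ℕ) : ℤ_[2] := (b : ℤ_[2]) * ∑' i : ℕ, (2 : ℤ_[2]) ^ (v * i)

/-- `b̄_{v,t} = b · ∑_{i=0}^{t-1} 2^{v i}` as a natural number. -/
def bbarFin (b v t : ℕ) : ℕ := b * ∑ i ∈ Finset.range t, 2 ^ (v * i)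

/-- The farPoint `fP(x,k)`: the least `r` such that no 2-adic congruent to `x`
mod `2^k` is a fixed point of `Φ` mod `2^{k+r}`, and `∞` if no such `r` exists. -/
def fP (x k : ℕ) : ℕ∞ :=
  sInf ((↑) '' {r : ℕ | ∀ z : ℤ_[2],
    (2 : ℤ_[2]) ^ k ∣ z - (x : ℤ_[2]) → ¬ (2 : ℤ_[2]) ^ (k + r) ∣ Phi z - z})

end

/-!
If `a < 2^k` is a natural number and `y ∈ ℤ₂`, the binary digits of `a + 2^k y` are the `k` digits
of `a` followed by those of `y`, so Bernstein's series splits as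
`Φ(a + 2^k y) = Φ(a) + 2^k 3^{-α(a)} Φ(y)`. Since `b̄_{v,∞} = b̄_{v,t} + 2^{tv} b̄_{v,∞}` with
`b̄_{v,t} < 2^{tv}` and `α(b̄_{v,t}) = t α(b)`, the theorem is this identity, rearranged.
-/

open Finset

namespace PadicInt

variable {p : ℕ} [Fact p.Prime]

lemma appr_eq_of_dvd_sub {k n : ℕ} {x : ℤ_[p]} (hn : n < p ^ k)
    (h : (p : ℤ_[p]) ^ k ∣ x - n) : x.appr k = n := by
  have hmod : toZModPow k x = toZModPow k (n : ℤ_[p]) := by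
    rw [← sub_eq_zero, ← map_sub, ← RingHom.mem_ker, ker_toZModPow,
      Ideal.mem_span_singleton]
    exact h
  have hval := congrArg ZMod.val hmod
  rwa [map_natCast, ZMod.val_natCast_of_lt hn, toZModPow, toZModHom,
    RingHom.coe_mk, MonoidHom.coe_mk, OneHom.coe_mk, ZMod.val_natCast_of_lt (x.appr_lt k)] at hval

end PadicInt

lemma dig_eq_of_dvd_sub {k j : ℕ} {x y : ℤ_[2]} (h : (2 : ℤ_[2]) ^ k ∣ x - y) (hj : j < k) :
    dig x j = dig y j := by
  have happr : x.appr (j + 1) = y.appr (j + 1) := by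
    refine PadicInt.appr_eq_of_dvd_sub (y.appr_lt _) ?_
    rw [show x - (y.appr (j + 1) : ℤ_[2]) = (x - y) + (y - y.appr (j + 1)) by ring]
    exact dvd_add ((pow_dvd_pow 2 hj).trans h) (two_pow_dvd_sub_appr _ y)
  rw [dig, happr, dig]

lemma dig_natCast (n j : ℕ) : dig (n : ℤ_[2]) j = (n.testBit j).toNat := by
  have happr : (n : ℤ_[2]).appr (j + 1) = n % 2 ^ (j + 1) := by
    refine PadicInt.appr_eq_of_dvd_sub (Nat.mod_lt _ (by positivity)) ⟨(n / 2 ^ (j + 1) : ℕ), ?_⟩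
    rw [sub_eq_iff_eq_add']
    exact_mod_cast (Nat.mod_add_div n (2 ^ (j + 1))).symm
  rw [dig, happr, Nat.testBit_mod_two_pow]
  cases n.testBit j <;> simp

lemma dig_natCast_add_two_pow_mul {a k : ℕ} (ha : a < 2 ^ k) (y : ℤ_[2]) (j : ℕ) :
    dig ((a : ℤ_[2]) + 2 ^ k * y) (j + k) = dig y j := by
  have hy := y.appr_lt (j + 1)
  have happr : ((a : ℤ_[2]) + 2 ^ k * y).appr (j + k + 1) = 2 ^ k * y.appr (j + 1) + a := by
    refine PadicInt.appr_eq_of_dvd_sub ?_ ?_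
    · calc 2 ^ k * y.appr (j + 1) + a < 2 ^ k * (y.appr (j + 1) + 1) := by linarith
        _ ≤ 2 ^ k * 2 ^ (j + 1) := Nat.mul_le_mul_left _ hy
        _ = 2 ^ (j + k + 1) := by ring
    · obtain ⟨c, hc⟩ := two_pow_dvd_sub_appr (j + 1) y
      exact ⟨c, by push_cast; linear_combination (2 : ℤ_[2]) ^ k * hc⟩
  rw [dig, happr, Nat.testBit_two_pow_mul_add _ ha, dig]
  simp

lemma digCount_eq_of_dvd_sub {k j : ℕ} {x y : ℤ_[2]} (h : (2 : ℤ_[2]) ^ k ∣ x - y) (hj : j ≤ k) :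
    digCount x j = digCount y j :=
  sum_congr rfl fun _ hi => dig_eq_of_dvd_sub h ((mem_range.1 hi).trans_le hj)

lemma digCount_natCast_add_two_pow_mul {a k : ℕ} (ha : a < 2 ^ k) (y : ℤ_[2]) (j : ℕ) :
    digCount ((a : ℤ_[2]) + 2 ^ k * y) (k + j) = digCount a k + digCount y j := by
  rw [digCount, sum_range_add, ← digCount, digCount_eq_of_dvd_sub ⟨y, by ring⟩ le_rfl]
  simp_rw [add_comm k, dig_natCast_add_two_pow_mul ha]
  rfl

lemma alphaNat_eq_sum_testBit {n k : ℕ} (hn : n < 2 ^ k) :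
    alphaNat n = ∑ i ∈ range k, (n.testBit i).toNat := by
  induction k generalizing n with
  | zero => simp [Nat.lt_one_iff.1 hn, alphaNat]
  | succ k ih =>
    rcases Nat.eq_zero_or_pos n with rfl | hpos
    · simp [alphaNat]
    have hbits : n.bits = n.testBit 0 :: (n / 2).bits := by
      conv_lhs => rw [← Nat.bit_testBit_zero_shiftRight_one n, Nat.shiftRight_one]
      refine Nat.bits_append_bit _ _ fun h => ?_
      simp only [Nat.testBit_zero, decide_eq_true_eq]
      omega
    rw [alphaNat, hbits, List.count_cons, ← alphaNat, ih (by rw [pow_succ] at hn; omega),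
      sum_range_succ']
    simp_rw [Nat.testBit_add_one]
    cases n.testBit 0 <;> simp

lemma digCount_natCast {n k : ℕ} (hn : n < 2 ^ k) : digCount (n : ℤ_[2]) k = alphaNat n := by
  simp_rw [digCount, dig_natCast, alphaNat_eq_sum_testBit hn]

noncomputable def phiTerm (x : ℤ_[2]) (j : ℕ) : ℤ_[2] := dig x j * 2 ^ j * inv3 ^ digCount x j

lemma Phi_eq_neg_tsum_phiTerm (x : ℤ_[2]) : Phi x = -∑' j, phiTerm x j := rfl

lemma norm_two_padicInt : ‖(2 : ℤ_[2])‖ = 2⁻¹ := by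
  simpa using PadicInt.norm_p (p := 2)

lemma norm_phiTerm_le (x : ℤ_[2]) (j : ℕ) : ‖phiTerm x j‖ ≤ 2⁻¹ ^ j := by
  rw [phiTerm, norm_mul, norm_mul, norm_pow, norm_two_padicInt]
  calc ‖(dig x j : ℤ_[2])‖ * 2⁻¹ ^ j * ‖inv3 ^ digCount x j‖ ≤ 1 * 2⁻¹ ^ j * 1 := by
        gcongr <;> exact PadicInt.norm_le_one _
    _ = 2⁻¹ ^ j := by ring

lemma summable_phiTerm (x : ℤ_[2]) : Summable (phiTerm x) :=
  .of_norm_bounded (summable_geometric_of_lt_one (by norm_num) (by norm_num)) (norm_phiTerm_le x)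

lemma phiTerm_eq_of_dvd_sub {k j : ℕ} {x y : ℤ_[2]} (h : (2 : ℤ_[2]) ^ k ∣ x - y) (hj : j < k) :
    phiTerm x j = phiTerm y j := by
  rw [phiTerm, phiTerm, dig_eq_of_dvd_sub h hj, digCount_eq_of_dvd_sub h hj.le]

lemma phiTerm_natCast_eq_zero {n j : ℕ} (hn : n < 2 ^ j) : phiTerm (n : ℤ_[2]) j = 0 := by
  simp [phiTerm, dig_natCast, Nat.testBit_lt_two_pow hn]

lemma phiTerm_natCast_add_two_pow_mul {a k : ℕ} (ha : a < 2 ^ k) (y : ℤ_[2]) (j : ℕ) :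
    phiTerm ((a : ℤ_[2]) + 2 ^ k * y) (j + k) = 2 ^ k * inv3 ^ alphaNat a * phiTerm y j := by
  rw [phiTerm, dig_natCast_add_two_pow_mul ha, add_comm j k, digCount_natCast_add_two_pow_mul ha,
    digCount_natCast ha, phiTerm, pow_add, pow_add]
  ring

lemma Phi_natCast_eq_sum {n k : ℕ} (hn : n < 2 ^ k) :
    Phi (n : ℤ_[2]) = -∑ j ∈ range k, phiTerm n j := by
  rw [Phi_eq_neg_tsum_phiTerm, tsum_eq_sum fun j hj => phiTerm_natCast_eq_zero <|
    hn.trans_le <| Nat.pow_le_pow_right two_pos <| not_lt.1 <| mem_range.not.1 hj]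

theorem Phi_natCast_add_two_pow_mul {a k : ℕ} (ha : a < 2 ^ k) (y : ℤ_[2]) :
    Phi ((a : ℤ_[2]) + 2 ^ k * y) = Phi a + 2 ^ k * inv3 ^ alphaNat a * Phi y := by
  have hhead : ∑ j ∈ range k, phiTerm ((a : ℤ_[2]) + 2 ^ k * y) j = ∑ j ∈ range k, phiTerm a j :=
    sum_congr rfl fun _ hj => phiTerm_eq_of_dvd_sub ⟨y, by ring⟩ (mem_range.1 hj)
  rw [Phi_eq_neg_tsum_phiTerm, ← (summable_phiTerm _).sum_add_tsum_nat_add k, hhead,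
    Phi_natCast_eq_sum ha, Phi_eq_neg_tsum_phiTerm]
  simp_rw [phiTerm_natCast_add_two_pow_mul ha]
  rw [(summable_phiTerm y).tsum_mul_left]
  ring

lemma bbarFin_succ (b v t : ℕ) : bbarFin b v (t + 1) = b + 2 ^ v * bbarFin b v t := by
  rw [bbarFin, bbarFin, sum_range_succ', mul_add, mul_zero, pow_zero, mul_one, add_comm, mul_sum,
    mul_sum, mul_sum]
  exact congrArg _ (sum_congr rfl fun i _ => by ring)

lemma bbarFin_lt {b v : ℕ} (hb : b < 2 ^ v) (t : ℕ) : bbarFin b v t < 2 ^ (t * v) := by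
  induction t with
  | zero => simp [bbarFin]
  | succ t ih =>
    calc bbarFin b v (t + 1) = b + 2 ^ v * bbarFin b v t := bbarFin_succ b v t
      _ < 2 ^ v * (bbarFin b v t + 1) := by linarith
      _ ≤ 2 ^ v * 2 ^ (t * v) := Nat.mul_le_mul_left _ ih
      _ = 2 ^ ((t + 1) * v) := by ring

lemma alphaNat_bbarFin {b v : ℕ} (hb : b < 2 ^ v) (t : ℕ) :
    alphaNat (bbarFin b v t) = alphaNat b * t := by
  induction t with
  | zero => simp [bbarFin, alphaNat]
  | succ t ih =>
    rw [← digCount_natCast (bbarFin_lt hb (t + 1)), bbarFin_succ, Nat.cast_add, Nat.cast_mul,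
      Nat.cast_pow, Nat.cast_ofNat, show (t + 1) * v = v + t * v by ring,
      digCount_natCast_add_two_pow_mul hb, digCount_natCast hb,
      digCount_natCast (bbarFin_lt hb t), ih]
    ring

lemma bbar_eq_bbarFin_add {v : ℕ} (hv : 1 ≤ v) (b t : ℕ) :
    bbar b v = bbarFin b v t + 2 ^ (t * v) * bbar b v := by
  have hr : ‖(2 : ℤ_[2]) ^ v‖ < 1 := by
    rw [norm_pow, norm_two_padicInt]
    exact pow_lt_one₀ (by positivity) (by norm_num) (by omega)
  have hgeom : Summable fun i : ℕ => (2 : ℤ_[2]) ^ (v * i) := by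
    simpa only [pow_mul] using summable_geometric_of_norm_lt_one hr
  have htail : ∑' i, (2 : ℤ_[2]) ^ (v * (i + t)) = 2 ^ (t * v) * ∑' i, (2 : ℤ_[2]) ^ (v * i) := by
    simp_rw [mul_add, pow_add, hgeom.tsum_mul_right]
    ring
  conv_lhs => rw [bbar, ← hgeom.sum_add_tsum_nat_add t, htail]
  rw [bbar, bbarFin]
  push_cast
  ring

/-- for `b < 2^v`, `v ≥ 1` and `m = α(b)`,
`Φ(b̄_{v,t}) = Φ(b̄_{v,∞}) − (Φ(b̄_{v,∞})/3^{mt})·2^{tv}` for all `t`. -/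
theorem stmt11 (v : ℕ) (hv : 1 ≤ v) (b : ℕ) (hb : b < 2 ^ v) (t : ℕ) :
    Phi ((bbarFin b v t : ℕ) : ℤ_[2]) =
      Phi (bbar b v) - Phi (bbar b v) * inv3 ^ (alphaNat b * t) * 2 ^ (t * v) := by
  have h := Phi_natCast_add_two_pow_mul (bbarFin_lt hb t) (bbar b v)
  rw [← bbar_eq_bbarFin_add hv b t, alphaNat_bbarFin hb] at h
  linear_combination -h
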